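/- arXiv:math/0610485 — 4 statements merged into one kernel-verified Lean document; each statement's English description precedes it below -/
import Mathlib

section
/- For every f in L²(E,μ;ℝ), the series Σ_n ⟪f, ξ_n⟫_{L²(μ)} · g_n converges in L²(Ω,ℙ); its sum is denoted ν(f) (the white noise integral of f). -/
open MeasureTheory ProbabilityTheory Filter

/-!
The `g n` are centred, independent and of unit variance, hence orthonormal in `L²(P)`. The
coefficients `⟪f, ξ n⟫` are square-summable because `ξ` is a Hilbert basis, so the series
`∑ ⟪f, ξ n⟫ • g n` converges in the complete space `L²(P)`, and any representative of its sum
is the required limit.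
-/

open scoped NNReal ENNReal InnerProductSpace

namespace ProbabilityTheory.HasLaw

variable {Ω : Type*} [MeasurableSpace Ω] {P : Measure Ω} {X : Ω → ℝ}

lemma memLp_of_gaussianReal {m : ℝ} {v : ℝ≥0} (hX : HasLaw X (gaussianReal m v) P)
    {p : ℝ≥0∞} (hp : p ≠ ∞) : MemLp X p P := by
  have h := memLp_id_gaussianReal' (μ := m) (v := v) p hp
  rw [← hX.map_eq] at h
  exact (memLp_map_measure_iff h.aestronglyMeasurable hX.aemeasurable).1 h

lemma integral_eq_of_gaussianReal {m : ℝ} {v : ℝ≥0}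
    (hX : HasLaw X (gaussianReal m v) P) : P[X] = m :=
  hX.integral_eq.trans integral_id_gaussianReal

lemma integral_sq_of_gaussianReal {v : ℝ≥0} (hX : HasLaw X (gaussianReal 0 v) P) :
    ∫ ω, X ω ^ 2 ∂P = v := by
  rw [← variance_of_integral_eq_zero hX.aemeasurable hX.integral_eq_of_gaussianReal,
    hX.variance_eq, variance_id_gaussianReal]

end ProbabilityTheory.HasLaw

lemma MeasureTheory.L2.real_inner_toLp_toLp {α : Type*} [MeasurableSpace α] {μ : Measure α}
    {f g : α → ℝ} (hf : MemLp f 2 μ) (hg : MemLp g 2 μ) :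
    ⟪hf.toLp f, hg.toLp g⟫_ℝ = ∫ x, f x * g x ∂μ := by
  rw [L2.inner_def]
  refine integral_congr_ae ?_
  filter_upwards [hf.coeFn_toLp, hg.coeFn_toLp] with x hfx hgx
  rw [hfx, hgx, RCLike.inner_apply, conj_trivial, mul_comm]

lemma orthonormal_toLp_of_indepFun {Ω ι : Type*} [MeasurableSpace Ω] {P : Measure Ω}
    {g : ι → Ω → ℝ} (hmem : ∀ i, MemLp (g i) 2 P)
    (hindep : Pairwise fun i j => IndepFun (g i) (g j) P)
    (hmean : ∀ i, P[g i] = 0) (hsq : ∀ i, ∫ ω, g i ω ^ 2 ∂P = 1) :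
    Orthonormal ℝ fun i => (hmem i).toLp (g i) := by
  classical
  rw [orthonormal_iff_ite]
  intro i j
  rw [L2.real_inner_toLp_toLp]
  split_ifs with hij
  · subst hij
    simpa only [sq] using hsq i
  · have h := (hindep hij).integral_mul_eq_mul_integral (hmem i).1 (hmem j).1
    rwa [hmean i, zero_mul] at h

lemma HilbertBasis.summable_inner_smul {ι 𝕜 E F : Type*} [RCLike 𝕜]
    [NormedAddCommGroup E] [InnerProductSpace 𝕜 E] [CompleteSpace E]
    [NormedAddCommGroup F] [InnerProductSpace 𝕜 F]
    (b : HilbertBasis ι 𝕜 F) {v : ι → E} (hv : Orthonormal 𝕜 v) (f : F) :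
    Summable fun i => ⟪b i, f⟫_𝕜 • v i := by
  simpa [b.repr_apply_apply] using hv.orthogonalFamily.summable_of_lp (b.repr f)

lemma MeasureTheory.Lp.tendsto_eLpNorm_sum_sub_of_hasSum {α E : Type*} [MeasurableSpace α]
    {μ : Measure α} [NormedAddCommGroup E] {p : ℝ≥0∞} [Fact (1 ≤ p)]
    {F : ℕ → α → E} (hF : ∀ n, MemLp (F n) p μ) {L : Lp E p μ}
    (hL : HasSum (fun n => (hF n).toLp (F n)) L) :
    Tendsto (fun N => eLpNorm (fun x => ∑ n ∈ Finset.range N, F n x - L x) p μ) atTop (nhds 0) := by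
  refine ((Lp.tendsto_Lp_iff_tendsto_eLpNorm' _ L).1 hL.tendsto_sum_nat).congr fun N => ?_
  refine eLpNorm_congr_ae ?_
  filter_upwards [Lp.coeFn_fun_finsetSum (Finset.range N) fun n => (hF n).toLp (F n),
    ae_all_iff.2 fun n => (hF n).coeFn_toLp] with x hsum hFx
  rw [Pi.sub_apply, hsum]
  simp only [hFx]

theorem white_noise_series_converges_in_L2_general
    {E : Type*} [MeasurableSpace E] (μ : Measure E)
    {Ω : Type*} [MeasurableSpace Ω] (P : Measure Ω)
    (ξ : HilbertBasis ℕ ℝ (Lp ℝ 2 μ))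
    (g : ℕ → Ω → ℝ) (hg_meas : ∀ n, Measurable (g n))
    (hg_indep : iIndepFun g P)
    (hg_law : ∀ n, Measure.map (g n) P = gaussianReal 0 1)
    (f : Lp ℝ 2 μ) :
    ∃ S : Ω → ℝ, MemLp S 2 P ∧
      Tendsto
        (fun N => eLpNorm
          (fun ω => (∑ n ∈ Finset.range N, (inner ℝ f (ξ n) : ℝ) * g n ω) - S ω) 2 P)
        atTop (nhds 0) := by
  have hlaw n : HasLaw (g n) (gaussianReal 0 1) P := ⟨(hg_meas n).aemeasurable, hg_law n⟩
  have hmem n : MemLp (g n) 2 P := (hlaw n).memLp_of_gaussianReal ENNReal.ofNat_ne_top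
  have horth : Orthonormal ℝ fun n => (hmem n).toLp (g n) :=
    orthonormal_toLp_of_indepFun hmem (fun _ _ hij => hg_indep.indepFun hij)
      (fun n => (hlaw n).integral_eq_of_gaussianReal)
      (fun n => by simpa using (hlaw n).integral_sq_of_gaussianReal)
  have hsum := (ξ.summable_inner_smul horth f).hasSum
  simp only [real_inner_comm f] at hsum
  -- `hsum` is accepted as is because `MemLp.toLp_const_smul` holds by `rfl`.
  exact ⟨_, Lp.memLp _,
    Lp.tendsto_eLpNorm_sum_sub_of_hasSum (fun n => (hmem n).const_smul ⟪f, ξ n⟫_ℝ) hsum⟩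

/-- For every `f` in `L²(E,μ;ℝ)`, the series
`Σ_n ⟪f, ξ n⟫_{L²(μ)} • g n` converges in `L²(Ω,P)`. -/
theorem white_noise_series_converges_in_L2
    {E : Type*} [MeasurableSpace E] (μ : Measure E) [IsFiniteMeasure μ]
    {Ω : Type*} [MeasurableSpace Ω] (P : Measure Ω) [IsProbabilityMeasure P]
    (ξ : HilbertBasis ℕ ℝ (Lp ℝ 2 μ))
    (g : ℕ → Ω → ℝ) (hg_meas : ∀ n, Measurable (g n))
    (hg_indep : iIndepFun g P)
    (hg_law : ∀ n, Measure.map (g n) P = gaussianReal 0 1)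
    (f : Lp ℝ 2 μ) :
    ∃ S : Ω → ℝ, MemLp S 2 P ∧
      Tendsto
        (fun N => eLpNorm
          (fun ω => (∑ n ∈ Finset.range N, (inner ℝ f (ξ n) : ℝ) * g n ω) - S ω) 2 P)
        atTop (nhds 0) :=
  white_noise_series_converges_in_L2_general μ P ξ g hg_meas hg_indep hg_law f
end

section
/- For every f in L²(E,μ;ℝ), the random variable ν(f) is a centered Gaussian random variable with variance ‖f‖²_{L²(μ)}; in particular, for every measurable set A ⊆ E, ν(1_A) is a centered Gaussian random variable with variance μ(A). -/
/-!
The partial sums `∑_{n<N} ⟪f, ξ n⟫ g n` are sums of independent centered Gaussians, hence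
centered Gaussian with variance `∑_{n<N} ⟪f, ξ n⟫²`, which tends to `‖f‖²` by Parseval.
They converge to `ν f` in `L²`, hence in distribution, and by Lévy's continuity theorem
Gaussian laws converge weakly when their parameters converge; uniqueness of weak limits
identifies the law of `ν f`. For `f = 1_A` one has `‖f‖² = μ A`.
-/

open MeasureTheory ProbabilityTheory Filter Topology
open scoped NNReal

namespace ProbabilityTheory

variable {Ω : Type*} [MeasurableSpace Ω] {P : Measure Ω} [IsProbabilityMeasure P]

lemma iIndepFun.map_finsetSum_eq_gaussianReal {ι : Type*} {X : ι → Ω → ℝ}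
    (hX : iIndepFun X P) (hX_meas : ∀ i, Measurable (X i)) {m : ι → ℝ} {v : ι → ℝ≥0}
    (hX_law : ∀ i, P.map (X i) = gaussianReal (m i) (v i)) (s : Finset ι) :
    P.map (∑ i ∈ s, X i) = gaussianReal (∑ i ∈ s, m i) (∑ i ∈ s, v i) := by
  classical
  induction s using Finset.induction_on with
  | empty =>
    rw [Finset.sum_empty, Finset.sum_empty, Finset.sum_empty, gaussianReal_zero_var,
      Pi.zero_def, Measure.map_const, measure_univ, one_smul]
  | insert i s hi ih =>
    rw [Finset.sum_insert hi, Finset.sum_insert hi, Finset.sum_insert hi, add_comm (X i),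
      add_comm (m i), add_comm (v i)]
    exact gaussianReal_add_gaussianReal_of_indepFun
      (hX.indepFun_finsetSum_of_notMem hX_meas hi) ih (hX_law i)

lemma tendsto_gaussianReal {m : ℕ → ℝ} {v : ℕ → ℝ≥0} {m₀ : ℝ} {v₀ : ℝ≥0}
    (hm : Tendsto m atTop (𝓝 m₀)) (hv : Tendsto v atTop (𝓝 v₀)) :
    Tendsto (β := ProbabilityMeasure ℝ) (fun n ↦ ⟨gaussianReal (m n) (v n), inferInstance⟩)
      atTop (𝓝 ⟨gaussianReal m₀ v₀, inferInstance⟩) := by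
  refine ProbabilityMeasure.tendsto_iff_tendsto_charFun.2 fun t ↦ ?_
  simp only [ProbabilityMeasure.coe_mk, charFun_gaussianReal]
  have hm_ℂ := Complex.continuous_ofReal.tendsto _ |>.comp hm
  have hv_ℂ := Complex.continuous_ofReal.tendsto _ |>.comp (NNReal.tendsto_coe.2 hv)
  exact (((tendsto_const_nhds.mul hm_ℂ).mul tendsto_const_nhds).sub
    ((hv_ℂ.mul tendsto_const_nhds).div_const _)).cexp

lemma map_eq_gaussianReal_of_tendstoInMeasure {X : ℕ → Ω → ℝ} {Z : Ω → ℝ}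
    (hX : ∀ n, AEMeasurable (X n) P) (hXZ : TendstoInMeasure P X atTop Z)
    {m : ℕ → ℝ} {v : ℕ → ℝ≥0} {m₀ : ℝ} {v₀ : ℝ≥0}
    (hX_law : ∀ n, P.map (X n) = gaussianReal (m n) (v n))
    (hm : Tendsto m atTop (𝓝 m₀)) (hv : Tendsto v atTop (𝓝 v₀)) :
    P.map Z = gaussianReal m₀ v₀ := by
  have h_gauss : Tendsto (β := ProbabilityMeasure ℝ)
      (fun n ↦ ⟨P.map (X n), Measure.isProbabilityMeasure_map (hX n)⟩)
      atTop (𝓝 ⟨gaussianReal m₀ v₀, inferInstance⟩) :=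
    (tendsto_gaussianReal hm hv).congr fun n ↦ Subtype.ext (hX_law n).symm
  exact congrArg (fun μ : ProbabilityMeasure ℝ ↦ (μ : Measure ℝ))
    (tendsto_nhds_unique (hXZ.tendstoInDistribution hX).tendsto h_gauss)

lemma map_eq_gaussianReal_of_tendsto_eLpNorm_sum {g : ℕ → Ω → ℝ}
    (hg_meas : ∀ n, Measurable (g n)) (hg_indep : iIndepFun g P)
    (hg_law : ∀ n, P.map (g n) = gaussianReal 0 1) {c : ℕ → ℝ} {v : ℝ≥0}
    (hc : HasSum (fun n ↦ c n ^ 2) v) {Z : Ω → ℝ} (hZ : AEStronglyMeasurable Z P)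
    (hconv : Tendsto (fun N ↦ eLpNorm (fun ω ↦ (∑ n ∈ Finset.range N, c n * g n ω) - Z ω) 2 P)
      atTop (𝓝 0)) :
    P.map Z = gaussianReal 0 v := by
  have hcg_meas n : Measurable ((c n * ·) ∘ g n) := (measurable_const_mul (c n)).comp (hg_meas n)
  have hcg_law n : P.map ((c n * ·) ∘ g n) = gaussianReal 0 (.mk (c n ^ 2) (sq_nonneg _)) := by
    rw [← Measure.map_map (measurable_const_mul (c n)) (hg_meas n), hg_law,
      gaussianReal_map_const_mul, mul_zero, mul_one]
  have hS_law N : P.map (fun ω ↦ ∑ n ∈ Finset.range N, c n * g n ω) =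
      gaussianReal 0 (∑ n ∈ Finset.range N, .mk (c n ^ 2) (sq_nonneg _)) := by
    have := (hg_indep.comp _ fun n ↦ measurable_const_mul (c n)).map_finsetSum_eq_gaussianReal
      hcg_meas hcg_law (Finset.range N)
    rwa [Finset.sum_fn, Finset.sum_const_zero] at this
  have hS_meas N : Measurable fun ω ↦ ∑ n ∈ Finset.range N, c n * g n ω :=
    Finset.measurable_fun_sum _ fun n _ ↦ hcg_meas n
  refine map_eq_gaussianReal_of_tendstoInMeasure (fun N ↦ (hS_meas N).aemeasurable)
    (tendstoInMeasure_of_tendsto_eLpNorm two_ne_zero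
      (fun N ↦ (hS_meas N).aestronglyMeasurable) hZ hconv)
    hS_law tendsto_const_nhds ?_
  rw [← NNReal.tendsto_coe]
  simpa only [NNReal.coe_sum, NNReal.coe_mk] using hc.tendsto_sum_nat

end ProbabilityTheory

lemma HilbertBasis.hasSum_inner_sq {ι E : Type*} [NormedAddCommGroup E] [InnerProductSpace ℝ E]
    (b : HilbertBasis ι ℝ E) (x : E) : HasSum (fun i ↦ inner ℝ x (b i) ^ 2) (‖x‖ ^ 2) := by
  simpa [sq, real_inner_comm x, real_inner_self_eq_norm_sq] using b.hasSum_inner_mul_inner x x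

lemma MeasureTheory.sq_nnnorm_indicatorConstLp_two {α : Type*} [MeasurableSpace α] {μ : Measure α}
    {s : Set α} (hs : MeasurableSet s) (hμs : μ s ≠ ⊤) (c : ℝ) :
    ‖indicatorConstLp 2 hs hμs c‖₊ ^ 2 = ‖c‖₊ ^ 2 * (μ s).toNNReal := by
  ext
  push_cast
  rw [norm_indicatorConstLp two_ne_zero ENNReal.ofNat_ne_top, mul_pow, ENNReal.toReal_ofNat,
    ← Real.sqrt_eq_rpow, Real.sq_sqrt measureReal_nonneg, measureReal_def]

/-- `ν f` is a centered Gaussian with variance `‖f‖²`; in particular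
`ν (1_A)` is a centered Gaussian with variance `μ A`. -/
theorem white_noise_is_gaussian
    {E : Type*} [MeasurableSpace E] (μ : Measure E) [IsFiniteMeasure μ]
    {Ω : Type*} [MeasurableSpace Ω] (P : Measure Ω) [IsProbabilityMeasure P]
    (ξ : HilbertBasis ℕ ℝ (Lp ℝ 2 μ))
    (g : ℕ → Ω → ℝ) (hg_meas : ∀ n, Measurable (g n))
    (hg_indep : iIndepFun g P)
    (hg_law : ∀ n, Measure.map (g n) P = gaussianReal 0 1)
    (ν : Lp ℝ 2 μ → Ω → ℝ)
    (hν : ∀ f : Lp ℝ 2 μ, MemLp (ν f) 2 P ∧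
      Tendsto
        (fun N => eLpNorm
          (fun ω => (∑ n ∈ Finset.range N, (inner ℝ f (ξ n) : ℝ) * g n ω) - ν f ω) 2 P)
        atTop (nhds 0))
    (f : Lp ℝ 2 μ) :
    Measure.map (ν f) P = gaussianReal 0 (‖f‖₊ ^ 2) ∧
    ∀ A : Set E, ∀ hA : MeasurableSet A,
      Measure.map (ν (indicatorConstLp 2 hA (measure_ne_top μ A) (1 : ℝ))) P
        = gaussianReal 0 (μ A).toNNReal := by
  have h_law (f : Lp ℝ 2 μ) : P.map (ν f) = gaussianReal 0 (‖f‖₊ ^ 2) :=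
    map_eq_gaussianReal_of_tendsto_eLpNorm_sum hg_meas hg_indep hg_law
      (by simpa using ξ.hasSum_inner_sq f) (hν f).1.aestronglyMeasurable (hν f).2
  refine ⟨h_law f, fun A hA ↦ ?_⟩
  rw [h_law, sq_nnnorm_indicatorConstLp_two, nnnorm_one, one_pow, one_mul]
end

section
/- For all f, g in L²(E,μ;ℝ), the covariance identity 𝔼_ℙ[ν(f)·ν(g)] = ⟪f, g⟫_{L²(μ)} holds. -/
/-! Independence, centring and unit variance make the classes of the `g n` orthonormal in
`L²(P)`, so `ν f` is the `L²(P)`-limit of `∑ ⟪ξ n, f⟫ • g n` along an orthonormal family. Taking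
inner products of the partial sums and passing to the limit, Parseval's identity for the Hilbert
basis `ξ` turns `⟪ν f, ν f'⟫_{L²(P)} = ∫ ν f * ν f' ∂P` into `⟪f, f'⟫`. -/

open MeasureTheory ProbabilityTheory Filter
open scoped InnerProductSpace

namespace MeasureTheory

variable {α : Type*} [MeasurableSpace α] {μ : Measure α}

lemma MemLp.inner_toLp_eq_integral_mul {f g : α → ℝ} (hf : MemLp f 2 μ) (hg : MemLp g 2 μ) :
    inner ℝ (hf.toLp f) (hg.toLp g) = ∫ a, f a * g a ∂μ := by
  rw [L2.inner_def]
  refine integral_congr_ae ?_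
  filter_upwards [hf.coeFn_toLp, hg.coeFn_toLp] with a hfa hga
  simp [hfa, hga, mul_comm]

lemma MemLp.toLp_sum {E : Type*} [NormedAddCommGroup E] {p : ENNReal} {ι : Type*}
    (s : Finset ι) {f : ι → α → E} (hf : ∀ i, MemLp (f i) p μ) :
    (memLp_finsetSum' s fun i _ => hf i).toLp (∑ i ∈ s, f i) = ∑ i ∈ s, (hf i).toLp (f i) := by
  classical
  induction s using Finset.induction_on with
  | empty => simp
  | insert a s ha ih =>
    simp only [Finset.sum_insert ha, ← ih]
    rfl

lemma tendsto_sum_smul_toLp_of_tendsto_eLpNorm {p : ENNReal} [Fact (1 ≤ p)] {X : ℕ → α → ℝ}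
    (hX : ∀ n, MemLp (X n) p μ) (c : ℕ → ℝ) {Y : α → ℝ} (hY : MemLp Y p μ)
    (h : Tendsto (fun N => eLpNorm (fun a => (∑ n ∈ Finset.range N, c n * X n a) - Y a) p μ)
      atTop (nhds 0)) :
    Tendsto (fun N => ∑ n ∈ Finset.range N, c n • (hX n).toLp (X n)) atTop (nhds (hY.toLp Y)) := by
  have hcX n : MemLp (c n • X n) p μ := (hX n).const_smul (c n)
  have := (Lp.tendsto_Lp_iff_tendsto_eLpNorm'' (fun N => ∑ n ∈ Finset.range N, c n • X n)
    (fun N => memLp_finsetSum' _ fun n _ => hcX n) Y hY).2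
    (by simpa only [Pi.sub_def, Finset.sum_apply, Pi.smul_apply, smul_eq_mul] using h)
  refine this.congr fun N => ?_
  rw [MemLp.toLp_sum _ hcX]
  exact Finset.sum_congr rfl fun n _ => MemLp.toLp_const_smul (c n) (hX n)

end MeasureTheory

namespace ProbabilityTheory

variable {Ω : Type*} [MeasurableSpace Ω] {P : Measure Ω}

lemma hasLaw_of_map_eq {𝓧 : Type*} [MeasurableSpace 𝓧] {X : Ω → 𝓧} {μ : Measure 𝓧} [NeZero μ]
    (h : P.map X = μ) : HasLaw X μ P :=
  ⟨AEMeasurable.of_map_ne_zero (h ▸ NeZero.ne μ), h⟩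

lemma HasLaw.memLp_of_gaussianReal_s2 {X : Ω → ℝ} {m : ℝ} {v : NNReal}
    (hX : HasLaw X (gaussianReal m v) P) {p : ENNReal} (hp : p ≠ ⊤) : MemLp X p P := by
  have := memLp_id_gaussianReal' (μ := m) (v := v) p hp
  rw [← hX.map_eq] at this
  exact (memLp_map_measure_iff (by rw [hX.map_eq]; exact aestronglyMeasurable_id)
    hX.aemeasurable).1 this

variable {ι : Type*} {X : ι → Ω → ℝ}

lemma orthonormal_toLp_of_pairwise_indepFun (hX : ∀ i, MemLp (X i) 2 P)
    (hindep : Pairwise fun i j => IndepFun (X i) (X j) P) (hmean : ∀ i, P[X i] = 0)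
    (hvar : ∀ i, Var[X i; P] = 1) : Orthonormal ℝ fun i => (hX i).toLp (X i) := by
  classical
  rw [orthonormal_iff_ite]
  intro i j
  rw [MemLp.inner_toLp_eq_integral_mul]
  split_ifs with hij
  · subst hij
    rw [← hvar i, variance_of_integral_eq_zero (hX i).aestronglyMeasurable.aemeasurable (hmean i)]
    simp only [sq]
  · rw [← Pi.mul_def, (hindep hij).integral_mul_eq_mul_integral (hX i).aestronglyMeasurable
      (hX j).aestronglyMeasurable, hmean i, zero_mul]

end ProbabilityTheory

lemma HilbertBasis.inner_eq_of_tendsto_sum_inner_smul {𝕜 E H : Type*} [RCLike 𝕜]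
    [NormedAddCommGroup E] [InnerProductSpace 𝕜 E] [NormedAddCommGroup H] [InnerProductSpace 𝕜 H]
    (b : HilbertBasis ℕ 𝕜 E) {v : ℕ → H} (hv : Orthonormal 𝕜 v) {x y : E} {x' y' : H}
    (hx : Tendsto (fun N => ∑ n ∈ Finset.range N, ⟪b n, x⟫_𝕜 • v n) atTop (nhds x'))
    (hy : Tendsto (fun N => ∑ n ∈ Finset.range N, ⟪b n, y⟫_𝕜 • v n) atTop (nhds y')) :
    ⟪x', y'⟫_𝕜 = ⟪x, y⟫_𝕜 := by
  refine tendsto_nhds_unique (hx.inner hy) ?_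
  simp_rw [hv.inner_sum, inner_conj_symm]
  exact (b.hasSum_inner_mul_inner x y).tendsto_sum_nat

theorem white_noise_covariance_general
    {E : Type*} [MeasurableSpace E] (μ : Measure E)
    {Ω : Type*} [MeasurableSpace Ω] (P : Measure Ω)
    (ξ : HilbertBasis ℕ ℝ (Lp ℝ 2 μ))
    (g : ℕ → Ω → ℝ)
    (hg_indep : iIndepFun g P)
    (hg_law : ∀ n, Measure.map (g n) P = gaussianReal 0 1)
    (ν : Lp ℝ 2 μ → Ω → ℝ)
    (hν : ∀ f : Lp ℝ 2 μ, MemLp (ν f) 2 P ∧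
      Tendsto
        (fun N => eLpNorm
          (fun ω => (∑ n ∈ Finset.range N, (inner ℝ f (ξ n) : ℝ) * g n ω) - ν f ω) 2 P)
        atTop (nhds 0))
    (f f' : Lp ℝ 2 μ) :
    ∫ ω, ν f ω * ν f' ω ∂P = (inner ℝ f f' : ℝ) := by
  have hlaw n : HasLaw (g n) (gaussianReal 0 1) P := hasLaw_of_map_eq (hg_law n)
  have hg n : MemLp (g n) 2 P := (hlaw n).memLp_of_gaussianReal_s2 ENNReal.ofNat_ne_top
  have horth : Orthonormal ℝ fun n => (hg n).toLp (g n) :=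
    orthonormal_toLp_of_pairwise_indepFun hg (fun _ _ hij => hg_indep.indepFun hij)
      (fun n => by rw [(hlaw n).integral_eq, integral_id_gaussianReal])
      (fun n => by rw [(hlaw n).variance_eq, variance_id_gaussianReal, NNReal.coe_one])
  have hseries (h : Lp ℝ 2 μ) : Tendsto (fun N => ∑ n ∈ Finset.range N,
      inner ℝ (ξ n) h • (hg n).toLp (g n)) atTop (nhds ((hν h).1.toLp (ν h))) := by
    simp_rw [real_inner_comm h]
    exact tendsto_sum_smul_toLp_of_tendsto_eLpNorm hg _ (hν h).1 (hν h).2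
  rw [← (hν f).1.inner_toLp_eq_integral_mul (hν f').1]
  exact ξ.inner_eq_of_tendsto_sum_inner_smul horth (hseries f) (hseries f')

/-- Covariance identity: `𝔼[ν f · ν g] = ⟪f, g⟫_{L²(μ)}`. -/
theorem white_noise_covariance
    {E : Type*} [MeasurableSpace E] (μ : Measure E) [IsFiniteMeasure μ]
    {Ω : Type*} [MeasurableSpace Ω] (P : Measure Ω) [IsProbabilityMeasure P]
    (ξ : HilbertBasis ℕ ℝ (Lp ℝ 2 μ))
    (g : ℕ → Ω → ℝ) (hg_meas : ∀ n, Measurable (g n))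
    (hg_indep : iIndepFun g P)
    (hg_law : ∀ n, Measure.map (g n) P = gaussianReal 0 1)
    (ν : Lp ℝ 2 μ → Ω → ℝ)
    (hν : ∀ f : Lp ℝ 2 μ, MemLp (ν f) 2 P ∧
      Tendsto
        (fun N => eLpNorm
          (fun ω => (∑ n ∈ Finset.range N, (inner ℝ f (ξ n) : ℝ) * g n ω) - ν f ω) 2 P)
        atTop (nhds 0))
    (f f' : Lp ℝ 2 μ) :
    ∫ ω, ν f ω * ν f' ω ∂P = (inner ℝ f f' : ℝ) :=
  white_noise_covariance_general μ P ξ g hg_indep hg_law ν hν f f'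
end

section
/- The set function A ↦ ν(1_A) is σ-additive in L²(Ω,ℙ): if (A_i)_{i∈ℕ} is a sequence of pairwise disjoint measurable subsets of E with union A, then the partial sums Σ_{i<n} ν(1_{A_i}) converge to ν(1_A) in L²(Ω,ℙ) as n → ∞. -/
/-!
Each partial sum `f ↦ ∑_{n<N} ⟪f, ξ n⟫ g n` is a continuous linear map `L²(μ) → L²(P)`, since a
Gaussian variable is square integrable. These maps converge pointwise to `ν`, so by Banach–Steinhaus
`ν` agrees a.e. with a continuous linear map. The claim then follows from the `σ`-additivity of
`A ↦ 1_A` in `L²(μ)`: by countable additivity of `μ`, the measure of `⋃ i, A i \ ⋃ i ∈ s, A i`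
tends to `0` along finite sets `s`.
-/

open MeasureTheory ProbabilityTheory Filter Topology Function
open scoped ENNReal symmDiff

section IndicatorConstLp

variable {α ι E : Type*} [MeasurableSpace α] {μ : Measure α} [IsFiniteMeasure μ]
  [NormedAddCommGroup E] {p : ℝ≥0∞} {A : ι → Set α}

theorem indicatorConstLp_biUnion_finset (hA : ∀ i, MeasurableSet (A i))
    (hdisj : Pairwise (Disjoint on A)) (s : Finset ι) (c : E) :
    indicatorConstLp p (s.measurableSet_biUnion fun i _ => hA i) (measure_ne_top μ _) c =
      ∑ i ∈ s, indicatorConstLp p (hA i) (measure_ne_top μ (A i)) c := by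
  classical
  induction s using Finset.induction_on with
  | empty => simp
  | insert a s ha ih =>
    simp only [Finset.set_biUnion_insert]
    rw [indicatorConstLp_disjoint_union (hA a) (s.measurableSet_biUnion fun i _ => hA i)
      (measure_ne_top μ _) (measure_ne_top μ _), ih, Finset.sum_insert ha]
    exact Set.disjoint_iUnion₂_right.2 fun i hi => hdisj (ne_of_mem_of_not_mem hi ha).symm

theorem hasSum_indicatorConstLp [Countable ι] [Fact (1 ≤ p)] (hp : p ≠ ∞)
    (hA : ∀ i, MeasurableSet (A i)) (hdisj : Pairwise (Disjoint on A)) (c : E) :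
    HasSum (fun i => indicatorConstLp p (hA i) (measure_ne_top μ (A i)) c)
      (indicatorConstLp p (MeasurableSet.iUnion hA) (measure_ne_top μ _) c) := by
  have hμ : Tendsto (fun s : Finset ι => μ (⋃ i ∈ s, A i)) atTop (𝓝 (μ (⋃ i, A i))) := by
    simp_rw [measure_biUnion_finset (fun i _ j _ hij => hdisj hij) fun i _ => hA i,
      measure_iUnion hdisj hA]
    exact ENNReal.summable.hasSum
  have hdiff : Tendsto (fun s : Finset ι => μ ((⋃ i ∈ s, A i) ∆ ⋃ i, A i)) atTop (𝓝 0) := by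
    have hsub (s : Finset ι) : (⋃ i ∈ s, A i) ⊆ ⋃ i, A i :=
      Set.iUnion₂_subset fun i _ => Set.subset_iUnion A i
    simp_rw [symmDiff_of_le (hsub _), measure_sdiff (hsub _)
      ((Finset.measurableSet_biUnion _ fun i _ => hA i).nullMeasurableSet) (measure_ne_top μ _)]
    simpa using ENNReal.Tendsto.sub (tendsto_const_nhds (x := μ (⋃ i, A i))) hμ
      (Or.inl (measure_ne_top μ _))
  unfold HasSum
  simp_rw [← indicatorConstLp_biUnion_finset hA hdisj]
  exact tendsto_indicatorConstLp_set hp hdiff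

end IndicatorConstLp

section

variable {E F Ω : Type*} [NormedAddCommGroup E] [NormedSpace ℝ E] [NormedAddCommGroup F]
  [NormedSpace ℝ F] [MeasurableSpace Ω] {P : Measure Ω} {p : ℝ≥0∞} [Fact (1 ≤ p)]

theorem exists_continuousLinearMap_ae_eq_of_tendsto_eLpNorm [CompleteSpace E]
    (T : ℕ → E →L[ℝ] Lp F p P) {V : E → Ω → F} (hV : ∀ f, MemLp (V f) p P)
    (hT : ∀ f, Tendsto (fun N => eLpNorm (⇑(T N f) - V f) p P) atTop (𝓝 0)) :
    ∃ L : E →L[ℝ] Lp F p P, ∀ f, L f =ᵐ[P] V f := by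
  have hlim : Tendsto (fun N f => T N f) atTop (𝓝 fun f => (hV f).toLp (V f)) :=
    tendsto_pi_nhds.2 fun f => (Lp.tendsto_Lp_iff_tendsto_eLpNorm _ _ (hV f)).2 (hT f)
  exact ⟨continuousLinearMapOfTendsto T hlim, fun f => (hV f).coeFn_toLp⟩

theorem exists_continuousLinearMap_ae_eq_of_tendsto_series [CompleteSpace E]
    (φ : ℕ → StrongDual ℝ E) {g : ℕ → Ω → ℝ} (hg : ∀ n, MemLp (g n) p P) {ν : E → Ω → ℝ}
    (hν : ∀ f, MemLp (ν f) p P ∧ Tendsto (fun N => eLpNorm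
      (fun ω => (∑ n ∈ Finset.range N, φ n f * g n ω) - ν f ω) p P) atTop (𝓝 0)) :
    ∃ L : E →L[ℝ] Lp ℝ p P, ∀ f, L f =ᵐ[P] ν f := by
  let T (N : ℕ) : E →L[ℝ] Lp ℝ p P :=
    ∑ n ∈ Finset.range N, (φ n).smulRight ((hg n).toLp (g n))
  have hT (N : ℕ) (f : E) :
      ⇑(T N f) =ᵐ[P] fun ω => ∑ n ∈ Finset.range N, φ n f * g n ω := by
    have hsmul : ∀ᵐ ω ∂P, ∀ n, (φ n f • (hg n).toLp (g n)) ω = φ n f * g n ω :=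
      ae_all_iff.2 fun n => by
        filter_upwards [Lp.coeFn_smul (φ n f) ((hg n).toLp (g n)), (hg n).coeFn_toLp]
          with ω h1 h2
        rw [h1, Pi.smul_apply, h2, smul_eq_mul]
    have hTf : T N f = ∑ n ∈ Finset.range N, φ n f • (hg n).toLp (g n) := by
      simp only [T, sum_apply, ContinuousLinearMap.smulRight_apply]
    filter_upwards [Lp.coeFn_fun_finsetSum (Finset.range N) fun n => φ n f • (hg n).toLp (g n),
      hsmul] with ω h1 h2
    rw [hTf, h1]
    exact Finset.sum_congr rfl fun n _ => h2 n
  refine exists_continuousLinearMap_ae_eq_of_tendsto_eLpNorm T (fun f => (hν f).1) fun f => ?_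
  refine (hν f).2.congr fun N => eLpNorm_congr_ae ?_
  filter_upwards [hT N f] with ω hω
  rw [Pi.sub_apply, hω]

theorem tendsto_eLpNorm_sum_sub_of_hasSum (L : E →L[ℝ] Lp F p P) {V : E → Ω → F}
    (hL : ∀ f, L f =ᵐ[P] V f) {x : ℕ → E} {s : E} (hs : HasSum x s) :
    Tendsto (fun n => eLpNorm (fun ω => (∑ i ∈ Finset.range n, V (x i) ω) - V s ω) p P)
      atTop (𝓝 0) := by
  refine ((Lp.tendsto_Lp_iff_tendsto_eLpNorm' _ _).1 (hs.mapL L).tendsto_sum_nat).congr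
    fun n => eLpNorm_congr_ae ?_
  filter_upwards [Lp.coeFn_fun_finsetSum (Finset.range n) fun i => L (x i), hL s,
    ae_all_iff.2 fun i => hL (x i)] with ω h1 h2 h3
  simp only [Pi.sub_apply, h1, h2, h3]

end

theorem white_noise_sigma_additive_general
    {E : Type*} [MeasurableSpace E] (μ : Measure E) [IsFiniteMeasure μ]
    {Ω : Type*} [MeasurableSpace Ω] (P : Measure Ω)
    (ξ : HilbertBasis ℕ ℝ (Lp ℝ 2 μ))
    (g : ℕ → Ω → ℝ)
    (hg_law : ∀ n, Measure.map (g n) P = gaussianReal 0 1)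
    (ν : Lp ℝ 2 μ → Ω → ℝ)
    (hν : ∀ f : Lp ℝ 2 μ, MemLp (ν f) 2 P ∧
      Tendsto
        (fun N => eLpNorm
          (fun ω => (∑ n ∈ Finset.range N, (inner ℝ f (ξ n) : ℝ) * g n ω) - ν f ω) 2 P)
        atTop (nhds 0))
    (A : ℕ → Set E) (hA : ∀ i, MeasurableSet (A i))
    (hdisj : Pairwise (Function.onFun Disjoint A)) :
    Tendsto
      (fun n => eLpNorm
        (fun ω =>
          (∑ i ∈ Finset.range n,
            ν (indicatorConstLp 2 (hA i) (measure_ne_top μ (A i)) (1 : ℝ)) ω) -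
          ν (indicatorConstLp 2 (MeasurableSet.iUnion hA) (measure_ne_top μ (⋃ i, A i))
              (1 : ℝ)) ω) 2 P)
      atTop (nhds 0) := by
  have hg (n : ℕ) : MemLp (g n) 2 P :=
    HasGaussianLaw.memLp_two ⟨by rw [hg_law n]; infer_instance⟩
  obtain ⟨L, hL⟩ :=
    exists_continuousLinearMap_ae_eq_of_tendsto_series (fun n => innerSLFlip ℝ (ξ n)) hg hν
  exact tendsto_eLpNorm_sum_sub_of_hasSum L hL
    (hasSum_indicatorConstLp ENNReal.ofNat_ne_top hA hdisj 1)

/-- `A ↦ ν (1_A)` is `σ`-additive in `L²(Ω,P)`. -/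
theorem white_noise_sigma_additive
    {E : Type*} [MeasurableSpace E] (μ : Measure E) [IsFiniteMeasure μ]
    {Ω : Type*} [MeasurableSpace Ω] (P : Measure Ω) [IsProbabilityMeasure P]
    (ξ : HilbertBasis ℕ ℝ (Lp ℝ 2 μ))
    (g : ℕ → Ω → ℝ) (hg_meas : ∀ n, Measurable (g n))
    (hg_indep : iIndepFun g P)
    (hg_law : ∀ n, Measure.map (g n) P = gaussianReal 0 1)
    (ν : Lp ℝ 2 μ → Ω → ℝ)
    (hν : ∀ f : Lp ℝ 2 μ, MemLp (ν f) 2 P ∧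
      Tendsto
        (fun N => eLpNorm
          (fun ω => (∑ n ∈ Finset.range N, (inner ℝ f (ξ n) : ℝ) * g n ω) - ν f ω) 2 P)
        atTop (nhds 0))
    (A : ℕ → Set E) (hA : ∀ i, MeasurableSet (A i))
    (hdisj : Pairwise (Function.onFun Disjoint A)) :
    Tendsto
      (fun n => eLpNorm
        (fun ω =>
          (∑ i ∈ Finset.range n,
            ν (indicatorConstLp 2 (hA i) (measure_ne_top μ (A i)) (1 : ℝ)) ω) -
          ν (indicatorConstLp 2 (MeasurableSet.iUnion hA) (measure_ne_top μ (⋃ i, A i))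
              (1 : ℝ)) ω) 2 P)
      atTop (nhds 0) :=
  white_noise_sigma_additive_general μ P ξ g hg_law ν hν A hA hdisj
end
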